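/- arXiv:1901.04120 — 2 statements merged into one kernel-verified Lean document; each statement's English description precedes it below -/
import Mathlib

section
/- Assume h > 0 > ℓ, α > 0, σ > 0, and ℓ^† < kα < h^†. Then Q₁(1) < Q₂(1), lim_{β→∞} Q₁(β) = ((γ−1)/(γ+1))·(−ℓ/h) > 0, and lim_{β→∞} Q₂(β) = 0. -/
open Real Filter Topology

/-!
Since `γ > 1`, the prefactor `(γ-1)/(γ+1)` of `Q₁` is smaller than the prefactor `(γ+1)/(γ-1)` of
`Q₂`, while at `β = 1` both share the same positive quotient `(-ℓ - (ℓ† - kα))/(h + h† - kα)`.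
As `β → ∞`, every power in `Q₁` has negative exponent, so `Q₁` tends to its value with those
powers removed; `Q₂` behaves like a multiple of `β^((γ-1)/2 - (γ+1)/2) = β⁻¹`.
-/

lemma one_lt_sqrt_one_add {x : ℝ} (hx : 0 < x) : 1 < √(1 + x) :=
  (Real.lt_sqrt zero_le_one).2 (by linarith)

lemma div_lt_div_of_one_lt {γ : ℝ} (hγ : 1 < γ) : (γ - 1) / (γ + 1) < (γ + 1) / (γ - 1) := by
  rw [div_lt_div_iff₀ (by linarith) (by linarith)]
  nlinarith

lemma tendsto_rpow_atTop_of_neg {p : ℝ} (hp : p < 0) :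
    Tendsto (fun β : ℝ => β ^ p) atTop (𝓝 0) := by
  simpa using tendsto_rpow_neg_atTop (neg_pos.2 hp)

lemma tendsto_sub_rpow_div_add_rpow {p q : ℝ} (a b c d : ℝ) (hp : p < 0) (hq : q < 0)
    (hb : b ≠ 0) :
    Tendsto (fun β : ℝ => (a - c * β ^ p) / (b + d * β ^ q)) atTop (𝓝 (a / b)) := by
  have hnum : Tendsto (fun β : ℝ => a - c * β ^ p) atTop (𝓝 a) := by
    simpa using tendsto_const_nhds.sub ((tendsto_rpow_atTop_of_neg hp).const_mul c)
  have hden : Tendsto (fun β : ℝ => b + d * β ^ q) atTop (𝓝 b) := by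
    simpa using tendsto_const_nhds.add ((tendsto_rpow_atTop_of_neg hq).const_mul d)
  exact hnum.div hden hb

/-- The quotient behaves like `-(c/d) β^(r-s)`. The rewriting is valid for every `β > 0`, even
where the denominators vanish, since both sides are then `0`. -/
lemma tendsto_sub_rpow_div_add_rpow_zero {r s : ℝ} (a b c d : ℝ) (hr : 0 < r) (hrs : r < s)
    (hd : d ≠ 0) :
    Tendsto (fun β : ℝ => (a - c * β ^ r) / (b + d * β ^ s)) atTop (𝓝 0) := by
  have hlim : Tendsto (fun β : ℝ => β ^ (r - s) * ((-c - -a * β ^ (-r)) / (d + b * β ^ (-s))))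
      atTop (𝓝 0) := by
    simpa using (tendsto_rpow_atTop_of_neg (sub_neg.2 hrs)).mul
      (tendsto_sub_rpow_div_add_rpow (-c) d (-a) b (neg_neg_of_pos hr)
        (neg_neg_of_pos (hr.trans hrs)) hd)
  refine hlim.congr' ?_
  filter_upwards [eventually_gt_atTop 0] with β hβ
  have hs : β ^ (-s) ≠ 0 := (rpow_pos_of_pos hβ _).ne'
  rw [← mul_div_mul_left (a - c * β ^ r) (b + d * β ^ s) hs, ← mul_div_assoc]
  have e₁ : β ^ (r - s) * β ^ (-r) = β ^ (-s) := by rw [← rpow_add hβ]; ring_nf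
  have e₂ : β ^ (-s) * β ^ r = β ^ (r - s) := by rw [← rpow_add hβ]; ring_nf
  have e₃ : β ^ (-s) * β ^ s = 1 := by rw [← rpow_add hβ]; simp
  congr 1
  · linear_combination a * e₁ + c * e₂
  · linear_combination (-d) * e₃

/-- Under `h > 0 > ℓ`, `α > 0`, `σ > 0`, `ℓ† < kα < h†`: `Q₁(1) < Q₂(1)`,
`Q₁(β) → ((γ-1)/(γ+1))·(-ℓ/h) > 0` as `β → ∞`, and `Q₂(β) → 0` as `β → ∞`. -/
theorem stmt_9 (h ℓ σ α γ hd ld k : ℝ) (hh : 0 < h) (hℓ : ℓ < 0) (hσ : 0 < σ) (hα : 0 < α)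
    (hγ : γ = Real.sqrt (1 + 8 * α * σ ^ 2 / (h - ℓ) ^ 2))
    (hld : ld < k * α) (hhd : k * α < hd)
    (Q₁ Q₂ : ℝ → ℝ)
    (hQ₁ : ∀ β : ℝ, Q₁ β = ((γ - 1) / (γ + 1)) *
      ((-ℓ - (ld - k * α) * β ^ (-((γ + 1) / 2))) / (h + (hd - k * α) * β ^ ((1 - γ) / 2))))
    (hQ₂ : ∀ β : ℝ, Q₂ β = ((γ + 1) / (γ - 1)) *
      ((-ℓ - (ld - k * α) * β ^ ((γ - 1) / 2)) / (h + (hd - k * α) * β ^ ((γ + 1) / 2)))) :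
    Q₁ 1 < Q₂ 1 ∧
    Tendsto Q₁ atTop (nhds (((γ - 1) / (γ + 1)) * (-ℓ / h))) ∧
    0 < ((γ - 1) / (γ + 1)) * (-ℓ / h) ∧
    Tendsto Q₂ atTop (nhds 0) := by
  have hγ1 : 1 < γ := hγ ▸ one_lt_sqrt_one_add (div_pos (by positivity) (pow_pos (by linarith) 2))
  obtain rfl : Q₁ = _ := funext hQ₁
  obtain rfl : Q₂ = _ := funext hQ₂
  refine ⟨?_, ?_, ?_, ?_⟩
  · have hR : 0 < (-ℓ - (ld - k * α)) / (h + (hd - k * α)) := div_pos (by linarith) (by linarith)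
    simpa only [one_rpow, mul_one] using mul_lt_mul_of_pos_right (div_lt_div_of_one_lt hγ1) hR
  · exact (tendsto_sub_rpow_div_add_rpow _ _ _ _ (by linarith) (by linarith) hh.ne').const_mul _
  · exact mul_pos (div_pos (by linarith) (by linarith)) (div_pos (by linarith) hh)
  · simpa using (tendsto_sub_rpow_div_add_rpow_zero _ _ _ _ (by linarith) (by linarith)
      (sub_ne_zero.2 hhd.ne')).const_mul ((γ + 1) / (γ - 1))
end

section
/- Assume ℓ^† < kα < h^†. Let θ̄ = −(γ+1)(ℓ^†−kα)/((γ−1)(h^†−kα) − (γ+1)(ℓ^†−kα)) and c = (−2(ℓ^†−kα)(h^†−kα)/α)/sqrt((γ²−1)(h^†−kα)(kα−ℓ^†)) · (((γ−1)/(γ+1))·((h^†−kα)/(kα−ℓ^†)))^{γ/2}. Then θ̄ ∈ (0,1), and the value-matching and smooth-pasting conditions hold at θ̄: c·ψ(θ̄) = (θ̄h^† + (1−θ̄)ℓ^†)/α − k and c·ψ'(θ̄) = (h^†−ℓ^†)/α. -/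
/-!
With `A = h† - kα`, `B = kα - ℓ†`, `u = (γ-1)A` and `v = (γ+1)B`, the threshold is
`θ̄ = v/(u+v)`. Since the exponents of `ψ(p) = p^a (1-p)^b` add up to one,
`ψ(θ̄) = v^a u^b/(u+v)` and `ψ'(θ̄) = v^a u^b (a/v - b/u)`, while `c = (2AB/α) (v^a u^b)⁻¹`.
Both conditions then reduce to rational identities in `A`, `B`, `γ`.
-/

open Real

theorem hasDerivAt_rpow_mul_one_sub_rpow {a b p : ℝ} (hp : 0 < p) (hp1 : p < 1) :
    HasDerivAt (fun x : ℝ => x ^ a * (1 - x) ^ b)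
      (p ^ a * (1 - p) ^ b * (a / p - b / (1 - p))) p := by
  have hq : (1 - p) ≠ 0 := (sub_pos.2 hp1).ne'
  have h₁ := hasDerivAt_rpow_const (p := a) (Or.inl hp.ne')
  have h₂ := (hasDerivAt_rpow_const (p := b) (Or.inl hq)).comp p
    ((hasDerivAt_id p).const_sub 1)
  refine (h₁.mul h₂).congr_deriv ?_
  rw [Function.comp_apply, rpow_sub_one hp.ne', rpow_sub_one hq]
  field_simp
  ring

theorem rpow_mul_one_sub_rpow_div_add {a b u v : ℝ} (hab : a + b = 1) (hu : 0 < u)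
    (hv : 0 < v) :
    (v / (u + v)) ^ a * (1 - v / (u + v)) ^ b = v ^ a * u ^ b / (u + v) := by
  have hS : 0 < u + v := add_pos hu hv
  have h₁ : 1 - v / (u + v) = u / (u + v) := by field_simp; ring
  rw [h₁, div_rpow hv.le hS.le, div_rpow hu.le hS.le, div_mul_div_comm, ← rpow_add hS, hab,
    rpow_one]

theorem deriv_rpow_mul_one_sub_rpow_div_add {a b u v : ℝ} (hab : a + b = 1) (hu : 0 < u)
    (hv : 0 < v) :
    deriv (fun x : ℝ => x ^ a * (1 - x) ^ b) (v / (u + v)) =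
      v ^ a * u ^ b * (a / v - b / u) := by
  have hS : 0 < u + v := add_pos hu hv
  have h₁ : 1 - v / (u + v) = u / (u + v) := by field_simp; ring
  rw [(hasDerivAt_rpow_mul_one_sub_rpow (by positivity)
    ((div_lt_one hS).2 (by linarith))).deriv, rpow_mul_one_sub_rpow_div_add hab hu hv, h₁]
  field_simp

theorem rpow_div_div_sqrt_mul {u v γ : ℝ} (hu : 0 < u) (hv : 0 < v) :
    (u / v) ^ (γ / 2) / √(u * v) = (v ^ ((1 + γ) / 2) * u ^ ((1 - γ) / 2))⁻¹ := by
  rw [div_rpow hu.le hv.le, sqrt_mul hu.le, sqrt_eq_rpow, sqrt_eq_rpow,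
    show (1 + γ) / 2 = 1 / 2 + γ / 2 by ring, show (1 - γ) / 2 = 1 / 2 - γ / 2 by ring,
    rpow_add hv, rpow_sub hu]
  have := rpow_pos_of_pos hu (γ / 2)
  have := rpow_pos_of_pos hv (γ / 2)
  have := rpow_pos_of_pos hu (1 / 2)
  have := rpow_pos_of_pos hv (1 / 2)
  field_simp

/-- The expansion threshold `θ̄ = -(γ+1)(ℓ†-kα)/((γ-1)(h†-kα) - (γ+1)(ℓ†-kα))`
lies in `(0,1)`, and with the constant `c` of Proposition 1(ii) the value-matching
and smooth-pasting conditions hold at `θ̄`. -/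
theorem stmt_11 (h ℓ σ α γ hd ld k : ℝ) (hh : 0 < h) (hℓ : ℓ < 0) (hσ : 0 < σ) (hα : 0 < α)
    (hγ : γ = Real.sqrt (1 + 8 * α * σ ^ 2 / (h - ℓ) ^ 2))
    (hld : ld < k * α) (hhd : k * α < hd)
    (ψ : ℝ → ℝ)
    (hψ : ∀ p : ℝ, ψ p = p ^ ((1 + γ) / 2) * (1 - p) ^ ((1 - γ) / 2))
    (θ c : ℝ)
    (hθ : θ = -(γ + 1) * (ld - k * α) /
      ((γ - 1) * (hd - k * α) - (γ + 1) * (ld - k * α)))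
    (hc : c = (-2 * (ld - k * α) * (hd - k * α) / α) /
        Real.sqrt ((γ ^ 2 - 1) * (hd - k * α) * (k * α - ld)) *
      (((γ - 1) / (γ + 1)) * ((hd - k * α) / (k * α - ld))) ^ (γ / 2)) :
    θ ∈ Set.Ioo (0 : ℝ) 1 ∧
    c * ψ θ = (θ * hd + (1 - θ) * ld) / α - k ∧
    c * deriv ψ θ = (hd - ld) / α := by
  have hγ1 : 1 < γ := by
    have : h - ℓ ≠ 0 := by linarith
    rw [hγ, lt_sqrt zero_le_one, one_pow, lt_add_iff_pos_right]
    positivity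
  set u := (γ - 1) * (hd - k * α)
  set v := (γ + 1) * (k * α - ld)
  have hu : 0 < u := mul_pos (by linarith) (by linarith)
  have hv : 0 < v := mul_pos (by linarith) (by linarith)
  have hab : (1 + γ) / 2 + (1 - γ) / 2 = 1 := by ring
  have hθv : θ = v / (u + v) := by rw [hθ]; ring
  have hcv : c = -2 * (ld - k * α) * (hd - k * α) / α * (u / v) ^ (γ / 2) / √(u * v) := by
    rw [hc, div_mul_div_comm, show (γ ^ 2 - 1) * (hd - k * α) * (k * α - ld) = u * v by ring]
    ring
  rw [mul_div_assoc, rpow_div_div_sqrt_mul hu hv] at hcv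
  rw [show ψ = _ from funext hψ, hθv, hcv]
  beta_reduce
  refine ⟨⟨by positivity, (div_lt_one (by positivity)).2 (by linarith)⟩, ?_, ?_⟩
  · rw [rpow_mul_one_sub_rpow_div_add hab hu hv]
    field_simp
    ring
  · rw [deriv_rpow_mul_one_sub_rpow_div_add hab hu hv]
    field_simp
    ring
end
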